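/- Lean-support equivalence is a congruence for composition of binding bigraphs: if G₁ is lean-support equivalent to G₁' and G₂ to G₂', then G₂ ∘ G₁ is lean-support equivalent to G₂' ∘ G₁' (whenever the composites are defined). -/

import Mathlib

namespace Bigraphs

/-- A binding bigraph `(n, X, locX) → (m, Y, locY)` over a set `K` of controls. -/
structure Bigraph (K : Type*) (n m : ℕ) (X Y : Type*) where
  V : Type
  E : Type
  PB : Type
  PF : Type
  ctrl : V → K
  nodeB : PB → V
  nodeF : PF → V
  locX : X → Option (Fin n)
  locY : Y → Option (Fin m)
  prnt : Sum (Fin n) V → Sum V (Fin m)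
  link : Sum (Sum PB PF) X → Sum E Y

variable {K : Type*} {n m k : ℕ} {X Y Z : Type*}

abbrev Bigraph.Point (G : Bigraph K n m X Y) := Sum (Sum G.PB G.PF) X

def compPrnt {V V' : Type*} (prnt : Sum (Fin n) V → Sum V (Fin m))
    (prnt' : Sum (Fin m) V' → Sum V' (Fin k)) :
    Sum (Fin n) (Sum V V') → Sum (Sum V V') (Fin k)
  | .inl i =>
      match prnt (.inl i) with
      | .inl v => .inl (.inl v)
      | .inr j =>
          match prnt' (.inl j) with
          | .inl v' => .inl (.inr v')
          | .inr r => .inr r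
  | .inr (.inl v) =>
      match prnt (.inr v) with
      | .inl w => .inl (.inl w)
      | .inr j =>
          match prnt' (.inl j) with
          | .inl v' => .inl (.inr v')
          | .inr r => .inr r
  | .inr (.inr v') =>
      match prnt' (.inr v') with
      | .inl w' => .inl (.inr w')
      | .inr r => .inr r

def pushSnd (G : Bigraph K n m X Y) (H : Bigraph K m k Y Z) :
    Sum H.E Z → Sum (Sum G.E H.E) Z
  | .inl e => .inl (.inr e)
  | .inr z => .inr z

def chase (G : Bigraph K n m X Y) (H : Bigraph K m k Y Z) :
    Sum G.E Y → Sum (Sum G.E H.E) Z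
  | .inl e => .inl (.inl e)
  | .inr y => pushSnd G H (H.link (.inr y))

/-- Composition of binding bigraphs. -/
def comp (G : Bigraph K n m X Y) (H : Bigraph K m k Y Z) : Bigraph K n k X Z where
  V := Sum G.V H.V
  E := Sum G.E H.E
  PB := Sum G.PB H.PB
  PF := Sum G.PF H.PF
  ctrl := Sum.elim G.ctrl H.ctrl
  nodeB := Sum.map G.nodeB H.nodeB
  nodeF := Sum.map G.nodeF H.nodeF
  locX := G.locX
  locY := H.locY
  prnt := compPrnt G.prnt H.prnt
  link := fun p =>
    match p with
    | .inl (.inl (.inl p)) => chase G H (G.link (.inl (.inl p)))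
    | .inl (.inl (.inr p)) => pushSnd G H (H.link (.inl (.inl p)))
    | .inl (.inr (.inl p)) => chase G H (G.link (.inl (.inr p)))
    | .inl (.inr (.inr p)) => pushSnd G H (H.link (.inl (.inr p)))
    | .inr x => chase G H (G.link (.inr x))

/-- Lean-support equivalence: after discarding idle edges, a bijection of nodes
and ports and a bijection of (non-idle) edges preserving control, parent and
link structure. -/
def LeanEquiv (G G' : Bigraph K n m X Y) : Prop :=
  ∃ (φV : G.V ≃ G'.V) (φB : G.PB ≃ G'.PB) (φF : G.PF ≃ G'.PF)
    (φE : {e : G.E // ∃ q : G.Point, G.link q = .inl e} ≃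
          {e' : G'.E // ∃ q : G'.Point, G'.link q = .inl e'}),
    (∀ v, G'.ctrl (φV v) = G.ctrl v) ∧
    (∀ p, G'.nodeB (φB p) = φV (G.nodeB p)) ∧
    (∀ p, G'.nodeF (φF p) = φV (G.nodeF p)) ∧
    (∀ a, G'.prnt (Sum.map id φV a) = Sum.map φV id (G.prnt a)) ∧
    (∀ p : G.Point,
      (∀ y : Y, G.link p = .inr y →
        G'.link (Sum.map (Sum.map φB φF) id p) = .inr y) ∧
      (∀ e, (he : G.link p = .inl e) →
        G'.link (Sum.map (Sum.map φB φF) id p) = .inl (φE ⟨e, p, he⟩).1))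

/-!
Replace the bijection of non-idle edges by a bi-unique relation `R` on all edges under which the
link maps correspond pointwise, as `Sum.LiftRel R Eq`. Such a relation already determines a
bijection of non-idle edges: the non-idle edges are the left parts of the range of the link map,
and the bijection of points carries one range onto the other. In this relational form composition
is straightforward: take sums of the node and port bijections, relate edges by
`Sum.LiftRel R₁ R₂`, and chase links through the middle interface.
-/

section LiftRel

variable {α β γ δ : Type*} {r : α → γ → Prop} {s : β → δ → Prop}

theorem _root_.Sum.liftRel_inl_left_iff {a : α} {y : γ ⊕ δ} :
    Sum.LiftRel r s (.inl a) y ↔ ∃ c, y = .inl c ∧ r a c := by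
  cases y <;> simp

theorem _root_.Sum.liftRel_inr_left_iff {b : β} {y : γ ⊕ δ} :
    Sum.LiftRel r s (.inr b) y ↔ ∃ d, y = .inr d ∧ s b d := by
  cases y <;> simp

theorem _root_.Sum.liftRel_inl_right_iff {x : α ⊕ β} {c : γ} :
    Sum.LiftRel r s x (.inl c) ↔ ∃ a, x = .inl a ∧ r a c := by
  cases x <;> simp

theorem _root_.Relator.BiUnique.sumLiftRel (hr : Relator.BiUnique r) (hs : Relator.BiUnique s) :
    Relator.BiUnique (Sum.LiftRel r s) := by
  constructor
  · rintro a b c (h₁ | h₁) h₂ <;> cases h₂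
    · rw [hr.1 h₁ ‹_›]
    · rw [hs.1 h₁ ‹_›]
  · rintro a b c (h₁ | h₁) h₂ <;> cases h₂
    · rw [hr.2 h₁ ‹_›]
    · rw [hs.2 h₁ ‹_›]

end LiftRel

section RangeEquiv

variable {P P' E E' Y Y' : Type*} {f : P → E ⊕ Y} {f' : P' → E' ⊕ Y'}
  {R : E → E' → Prop} {S : Y → Y' → Prop}

theorem _root_.Sum.exists_rel_of_forall_liftRel (ψ : P ≃ P')
    (h : ∀ p, Sum.LiftRel R S (f p) (f' (ψ p))) (e : {e // ∃ p, f p = .inl e}) :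
    ∃ e' : {e' // ∃ p', f' p' = .inl e'}, R e e' := by
  obtain ⟨e, p, hp⟩ := e
  obtain ⟨e', he', hR⟩ := Sum.liftRel_inl_left_iff.mp (hp ▸ h p)
  exact ⟨⟨e', ψ p, he'⟩, hR⟩

theorem _root_.Sum.exists_rel_of_forall_liftRel' (ψ : P ≃ P')
    (h : ∀ p, Sum.LiftRel R S (f p) (f' (ψ p))) (e' : {e' // ∃ p', f' p' = .inl e'}) :
    ∃ e : {e // ∃ p, f p = .inl e}, R e e' := by
  obtain ⟨e', p', hp'⟩ := e'
  have hlink := h (ψ.symm p')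
  rw [ψ.apply_symm_apply, hp'] at hlink
  obtain ⟨e, he, hR⟩ := Sum.liftRel_inl_right_iff.mp hlink
  exact ⟨⟨e, ψ.symm p', he⟩, hR⟩

noncomputable def _root_.Equiv.ofForallLiftRel (ψ : P ≃ P') (hR : Relator.BiUnique R)
    (h : ∀ p, Sum.LiftRel R S (f p) (f' (ψ p))) :
    {e // ∃ p, f p = .inl e} ≃ {e' // ∃ p', f' p' = .inl e'} :=
  Equiv.ofBijective (fun e => (Sum.exists_rel_of_forall_liftRel ψ h e).choose) <| by
    constructor
    · intro a b hab
      dsimp only at hab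
      have hb := (Sum.exists_rel_of_forall_liftRel ψ h b).choose_spec
      rw [← hab] at hb
      exact Subtype.ext <| hR.1 (Sum.exists_rel_of_forall_liftRel ψ h a).choose_spec hb
    · intro e'
      obtain ⟨e, he⟩ := Sum.exists_rel_of_forall_liftRel' ψ h e'
      exact ⟨e, Subtype.ext <| hR.2 (Sum.exists_rel_of_forall_liftRel ψ h e).choose_spec he⟩

theorem _root_.Equiv.rel_ofForallLiftRel (ψ : P ≃ P') (hR : Relator.BiUnique R)
    (h : ∀ p, Sum.LiftRel R S (f p) (f' (ψ p))) (e : {e // ∃ p, f p = .inl e}) :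
    R e (Equiv.ofForallLiftRel ψ hR h e) :=
  (Sum.exists_rel_of_forall_liftRel ψ h e).choose_spec

end RangeEquiv

theorem compPrnt_map {V V' W W' : Type*} {prnt : Fin n ⊕ V → V ⊕ Fin m}
    {prnt' : Fin n ⊕ W → W ⊕ Fin m} {ρ : Fin m ⊕ V' → V' ⊕ Fin k}
    {ρ' : Fin m ⊕ W' → W' ⊕ Fin k} (f : V → W) (g : V' → W')
    (hf : ∀ a, prnt' (Sum.map id f a) = Sum.map f id (prnt a))
    (hg : ∀ a, ρ' (Sum.map id g a) = Sum.map g id (ρ a)) (a : Fin n ⊕ (V ⊕ V')) :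
    compPrnt prnt' ρ' (Sum.map id (Sum.map f g) a) =
      Sum.map (Sum.map f g) id (compPrnt prnt ρ a) := by
  have hρ (j : Fin m) : ρ' (.inl j) = Sum.map g id (ρ (.inl j)) := hg (.inl j)
  rcases a with i | v | v
  · have hi := hf (.inl i)
    rcases hp : prnt (.inl i) with w | j
    · simp_all [compPrnt]
    · rcases hq : ρ (.inl j) with w' | r <;> simp_all [compPrnt]
  · have hv := hf (.inr v)
    rcases hp : prnt (.inr v) with w | j
    · simp_all [compPrnt]
    · rcases hq : ρ (.inl j) with w' | r <;> simp_all [compPrnt]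
  · have hv := hg (.inr v)
    rcases hq : ρ (.inr v) with w' | r <;> simp_all [compPrnt]

structure IsLeanIso (G G' : Bigraph K n m X Y) (φV : G.V ≃ G'.V) (φB : G.PB ≃ G'.PB)
    (φF : G.PF ≃ G'.PF) (R : G.E → G'.E → Prop) : Prop where
  ctrl : ∀ v, G'.ctrl (φV v) = G.ctrl v
  nodeB : ∀ p, G'.nodeB (φB p) = φV (G.nodeB p)
  nodeF : ∀ p, G'.nodeF (φF p) = φV (G.nodeF p)
  prnt : ∀ a, G'.prnt (Sum.map id φV a) = Sum.map φV id (G.prnt a)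
  biUnique : Relator.BiUnique R
  link : ∀ p, Sum.LiftRel R Eq (G.link p) (G'.link (Sum.map (Sum.map φB φF) id p))

theorem leanEquiv_iff {G G' : Bigraph K n m X Y} :
    LeanEquiv G G' ↔ ∃ φV φB φF R, IsLeanIso G G' φV φB φF R := by
  constructor
  · rintro ⟨φV, φB, φF, φE, hctrl, hnodeB, hnodeF, hprnt, hlink⟩
    refine ⟨φV, φB, φF, fun e e' => ∃ h, (φE ⟨e, h⟩).1 = e',
      ⟨hctrl, hnodeB, hnodeF, hprnt, ?_, ?_⟩⟩
    · refine ⟨?_, ?_⟩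
      · rintro a b _ ⟨_, rfl⟩ ⟨_, hab⟩
        exact congrArg Subtype.val (φE.injective (Subtype.ext hab)).symm
      · rintro a _ _ ⟨_, rfl⟩ ⟨_, rfl⟩
        rfl
    · intro p
      rcases he : G.link p with e | y
      · rw [(hlink p).2 e he]
        exact .inl ⟨⟨p, he⟩, rfl⟩
      · rw [(hlink p).1 y he]
        exact .inr rfl
  · rintro ⟨φV, φB, φF, R, hiso⟩
    let ψ : G.Point ≃ G'.Point := (φB.sumCongr φF).sumCongr (.refl X)
    refine ⟨φV, φB, φF, .ofForallLiftRel ψ hiso.biUnique hiso.link, hiso.ctrl, hiso.nodeB,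
      hiso.nodeF, hiso.prnt, fun p => ⟨fun y hy => ?_, fun e he => ?_⟩⟩
    · obtain ⟨y', hy', rfl⟩ := Sum.liftRel_inr_left_iff.mp (hy ▸ hiso.link p)
      exact hy'
    · obtain ⟨e', he', hR⟩ := Sum.liftRel_inl_left_iff.mp (he ▸ hiso.link p)
      have hφE := Equiv.rel_ofForallLiftRel ψ hiso.biUnique hiso.link ⟨e, p, he⟩
      rw [he', hiso.biUnique.2 hR hφE]

section Comp

variable {G₁ G₁' : Bigraph K n m X Y} {G₂ G₂' : Bigraph K m k Y Z}

theorem liftRel_pushSnd {R₁ : G₁.E → G₁'.E → Prop} {R₂ : G₂.E → G₂'.E → Prop}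
    {S : Z → Z → Prop} {a : G₂.E ⊕ Z} {a' : G₂'.E ⊕ Z} (h : Sum.LiftRel R₂ S a a') :
    Sum.LiftRel (Sum.LiftRel R₁ R₂) S (pushSnd G₁ G₂ a) (pushSnd G₁' G₂' a') := by
  cases h with
  | inl h => exact .inl (.inr h)
  | inr h => exact .inr h

theorem liftRel_chase {R₁ : G₁.E → G₁'.E → Prop} {R₂ : G₂.E → G₂'.E → Prop}
    {S : Z → Z → Prop} (hY : ∀ y, Sum.LiftRel R₂ S (G₂.link (.inr y)) (G₂'.link (.inr y)))
    {a : G₁.E ⊕ Y} {a' : G₁'.E ⊕ Y} (h : Sum.LiftRel R₁ Eq a a') :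
    Sum.LiftRel (Sum.LiftRel R₁ R₂) S (chase G₁ G₂ a) (chase G₁' G₂' a') := by
  cases h with
  | inl h => exact .inl (.inl h)
  | inr h => subst h; exact liftRel_pushSnd (hY _)

theorem IsLeanIso.comp {φV₁ φB₁ φF₁ R₁} {φV₂ φB₂ φF₂ R₂}
    (h₁ : IsLeanIso G₁ G₁' φV₁ φB₁ φF₁ R₁) (h₂ : IsLeanIso G₂ G₂' φV₂ φB₂ φF₂ R₂) :
    IsLeanIso (comp G₁ G₂) (comp G₁' G₂') (φV₁.sumCongr φV₂) (φB₁.sumCongr φB₂)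
      (φF₁.sumCongr φF₂) (Sum.LiftRel R₁ R₂) where
  ctrl := by
    rintro (v | v)
    exacts [h₁.ctrl v, h₂.ctrl v]
  nodeB := by
    rintro (p | p)
    exacts [congrArg Sum.inl (h₁.nodeB p), congrArg Sum.inr (h₂.nodeB p)]
  nodeF := by
    rintro (p | p)
    exacts [congrArg Sum.inl (h₁.nodeF p), congrArg Sum.inr (h₂.nodeF p)]
  prnt := compPrnt_map φV₁ φV₂ h₁.prnt h₂.prnt
  biUnique := h₁.biUnique.sumLiftRel h₂.biUnique
  link := by
    have hY (y : Y) := h₂.link (.inr y)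
    rintro (((p | p) | (p | p)) | x)
    · exact liftRel_chase hY (h₁.link (.inl (.inl p)))
    · exact liftRel_pushSnd (h₂.link (.inl (.inl p)))
    · exact liftRel_chase hY (h₁.link (.inl (.inr p)))
    · exact liftRel_pushSnd (h₂.link (.inl (.inr p)))
    · exact liftRel_chase hY (h₁.link (.inr x))

end Comp

/-- Lean-support equivalence is a congruence for composition of binding
bigraphs. -/
theorem leanEquiv_comp (G₁ G₁' : Bigraph K n m X Y) (G₂ G₂' : Bigraph K m k Y Z)
    (h₁ : LeanEquiv G₁ G₁') (h₂ : LeanEquiv G₂ G₂') :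
    LeanEquiv (comp G₁ G₂) (comp G₁' G₂') := by
  obtain ⟨_, _, _, _, hiso₁⟩ := leanEquiv_iff.mp h₁
  obtain ⟨_, _, _, _, hiso₂⟩ := leanEquiv_iff.mp h₂
  exact leanEquiv_iff.mpr ⟨_, _, _, _, hiso₁.comp hiso₂⟩

end Bigraphs
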